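/- arXiv:2305.18348 — 2 statements merged into one kernel-verified Lean document; each statement's English description precedes it below -/
import Mathlib

section
/- For all t₁, t₂, t₃ ∈ (-1, 1) and λ ∈ [0,1], we have (t₁ + t₂ + t₃ + t₁t₂t₃) · arctanh(λ(t₁ + t₂ + t₃ + t₁t₂t₃) / (1 + λ(t₁t₂ + t₂t₃ + t₃t₁))) ≤ λ(t₁ + t₂ + t₃ + t₁t₂t₃) · (arctanh(t₁) + arctanh(t₂) + arctanh(t₃)). -/
/-!
With `A = (1 + t₁)(1 + t₂)(1 + t₃)` and `B = (1 - t₁)(1 - t₂)(1 - t₃)` one has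
`t₁ + t₂ + t₃ + t₁t₂t₃ = (A - B) / 2`, the sum of the `arctanh tᵢ` is `(log A - log B) / 2`, and
the argument of the left-hand `arctanh` is `(D A - D B) / (D A + D B)` with `D x = 1 - λ + λ x`.
The inequality thus becomes `(A - B) (g A - g B) ≤ 0` for the Jensen gap
`g x = log (1 - λ + λ x) - λ log x` of the logarithm. Now `g` decreases on `(0, 1]` and increases
afterwards, so monotonicity alone does not suffice; but AM-GM gives `A^(1/3) + B^(1/3) ≤ 2`, so if
the larger cube root is `1 + s`, the smaller one is at most `1 - s`, and
`g ((1 + s)³) ≤ g ((1 - s)³)` because the derivative in `s` of the difference has numerator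
`6 λ (1 - λ) (s⁴ + λ ((1 + s)³ - 1) (1 - (1 - s)³)) ≥ 0`.
-/

noncomputable def arctanh (x : ℝ) : ℝ := (1/2) * Real.log ((1+x)/(1-x))

open Real Set

theorem arctanh_sub_div_add {p q : ℝ} (hp : 0 < p) (hq : 0 < q) :
    arctanh ((p - q) / (p + q)) = (log p - log q) / 2 := by
  have hpq : p + q ≠ 0 := by positivity
  have hnum : 1 + (p - q) / (p + q) = 2 * p / (p + q) := by field_simp; ring
  have hden : 1 - (p - q) / (p + q) = 2 * q / (p + q) := by field_simp; ring
  rw [arctanh, hnum, hden, div_div_div_cancel_right₀ hpq, mul_div_mul_left _ _ two_ne_zero,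
    log_div hp.ne' hq.ne']
  ring

theorem arctanh_eq_half_log_sub {t : ℝ} (ht : t ∈ Ioo (-1 : ℝ) 1) :
    arctanh t = (log (1 + t) - log (1 - t)) / 2 := by
  have h := arctanh_sub_div_add (p := 1 + t) (q := 1 - t) (by linarith [ht.1]) (by linarith [ht.2])
  rwa [show (1 + t - (1 - t)) / (1 + t + (1 - t)) = t by ring] at h

theorem arctanh_add_arctanh_add_arctanh {t₁ t₂ t₃ : ℝ} (h₁ : t₁ ∈ Ioo (-1 : ℝ) 1)
    (h₂ : t₂ ∈ Ioo (-1 : ℝ) 1) (h₃ : t₃ ∈ Ioo (-1 : ℝ) 1) :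
    arctanh t₁ + arctanh t₂ + arctanh t₃
      = (log ((1 + t₁) * (1 + t₂) * (1 + t₃)) - log ((1 - t₁) * (1 - t₂) * (1 - t₃))) / 2 := by
  have hp₁ : 0 < 1 + t₁ := by linarith [h₁.1]
  have hp₂ : 0 < 1 + t₂ := by linarith [h₂.1]
  have hp₃ : 0 < 1 + t₃ := by linarith [h₃.1]
  have hq₁ : 0 < 1 - t₁ := by linarith [h₁.2]
  have hq₂ : 0 < 1 - t₂ := by linarith [h₂.2]
  have hq₃ : 0 < 1 - t₃ := by linarith [h₃.2]
  rw [arctanh_eq_half_log_sub h₁, arctanh_eq_half_log_sub h₂, arctanh_eq_half_log_sub h₃,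
    log_mul (by positivity) hp₃.ne', log_mul hp₁.ne' hp₂.ne',
    log_mul (by positivity) hq₃.ne', log_mul hq₁.ne' hq₂.ne']
  ring

theorem one_sub_add_mul_pos {l x : ℝ} (hl : l ∈ Icc (0 : ℝ) 1) (hx : 0 < x) :
    0 < 1 - l + l * x := by
  rcases hl with ⟨hl0, hl1⟩
  rcases hl1.lt_or_eq with hl1 | rfl
  · nlinarith
  · simpa using hx

noncomputable def logJensenGap (l x : ℝ) : ℝ := log (1 - l + l * x) - l * log x

theorem hasDerivAt_logJensenGap {l x : ℝ} (hx : 0 < x) (hD : 0 < 1 - l + l * x) :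
    HasDerivAt (logJensenGap l) (l * (1 - l) * (x - 1) / (x * (1 - l + l * x))) x := by
  have hlin : HasDerivAt (fun y => 1 - l + l * y) l x := by
    simpa using ((hasDerivAt_id x).const_mul l).const_add (1 - l)
  exact ((hlin.log hD.ne').sub ((hasDerivAt_log hx.ne').const_mul l)).congr_deriv
    (by field_simp; ring)

theorem logJensenGap_antitoneOn {l : ℝ} (hl : l ∈ Icc (0 : ℝ) 1) :
    AntitoneOn (logJensenGap l) (Ioc 0 1) := by
  have hderiv : ∀ x ∈ Ioc (0 : ℝ) 1, HasDerivAt (logJensenGap l) _ x := fun x hx =>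
    hasDerivAt_logJensenGap hx.1 (one_sub_add_mul_pos hl hx.1)
  refine antitoneOn_of_deriv_nonpos (convex_Ioc 0 1)
    (fun x hx => (hderiv x hx).continuousAt.continuousWithinAt) ?_ ?_
  · rw [interior_Ioc]
    exact fun x hx => (hderiv x (Ioo_subset_Ioc_self hx)).differentiableAt.differentiableWithinAt
  · rw [interior_Ioc]
    intro x hx
    rw [(hderiv x (Ioo_subset_Ioc_self hx)).deriv]
    exact div_nonpos_of_nonpos_of_nonneg
      (mul_nonpos_of_nonneg_of_nonpos (mul_nonneg hl.1 (sub_nonneg.2 hl.2)) (sub_nonpos.2 hx.2.le))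
      (mul_pos hx.1 (one_sub_add_mul_pos hl hx.1)).le

theorem logJensenGap_one_add_pow_three_le {l s : ℝ} (hl : l ∈ Icc (0 : ℝ) 1) (hs0 : 0 ≤ s)
    (hs1 : s < 1) : logJensenGap l ((1 + s) ^ 3) ≤ logJensenGap l ((1 - s) ^ 3) := by
  set h : ℝ → ℝ := fun s => logJensenGap l ((1 - s) ^ 3) - logJensenGap l ((1 + s) ^ 3)
  have hderiv : ∀ s ∈ Ico (0 : ℝ) 1, HasDerivAt h
      (6 * l * (1 - l) * (s ^ 4 + l * ((1 + s) ^ 3 - 1) * (1 - (1 - s) ^ 3))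
        / ((1 - s) * (1 + s) * (1 - l + l * (1 - s) ^ 3) * (1 - l + l * (1 + s) ^ 3))) s := by
    rintro s ⟨hs0, hs1⟩
    have hm : 0 < 1 - s := by linarith
    have hp : 0 < 1 + s := by linarith
    have hDm := one_sub_add_mul_pos hl (pow_pos hm 3)
    have hDp := one_sub_add_mul_pos hl (pow_pos hp 3)
    have hcube_m : HasDerivAt (fun s : ℝ => (1 - s) ^ 3) (-3 * (1 - s) ^ 2) s :=
      (((hasDerivAt_id' s).const_sub 1).fun_pow 3).congr_deriv (by norm_num)
    have hcube_p : HasDerivAt (fun s : ℝ => (1 + s) ^ 3) (3 * (1 + s) ^ 2) s :=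
      (((hasDerivAt_id' s).const_add 1).fun_pow 3).congr_deriv (by norm_num)
    refine (((hasDerivAt_logJensenGap (pow_pos hm 3) hDm).comp s hcube_m).sub
      ((hasDerivAt_logJensenGap (pow_pos hp 3) hDp).comp s hcube_p)).congr_deriv ?_
    field_simp
    ring
  have hmono : MonotoneOn h (Ico 0 1) := by
    refine monotoneOn_of_deriv_nonneg (convex_Ico 0 1)
      (fun s hs => (hderiv s hs).continuousAt.continuousWithinAt) ?_ ?_
    · rw [interior_Ico]
      exact fun s hs => (hderiv s (Ioo_subset_Ico_self hs)).differentiableAt.differentiableWithinAt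
    · rw [interior_Ico]
      rintro s ⟨hs0, hs1⟩
      rw [(hderiv s ⟨hs0.le, hs1⟩).deriv]
      have hm : 0 < 1 - s := by linarith
      have hDm := one_sub_add_mul_pos hl (pow_pos hm 3)
      have hDp := one_sub_add_mul_pos hl (pow_pos (by linarith : 0 < 1 + s) 3)
      have hu : 0 ≤ (1 + s) ^ 3 - 1 := sub_nonneg.2 (one_le_pow₀ (by linarith))
      have hv : 0 ≤ 1 - (1 - s) ^ 3 := sub_nonneg.2 (pow_le_one₀ hm.le (by linarith))
      have hl' : 0 ≤ 1 - l := sub_nonneg.2 hl.2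
      exact div_nonneg (mul_nonneg (mul_nonneg (mul_nonneg (by norm_num) hl.1) hl')
        (add_nonneg (by positivity) (mul_nonneg (mul_nonneg hl.1 hu) hv))) (by positivity)
  simpa [h] using hmono ⟨le_rfl, zero_lt_one⟩ ⟨hs0, hs1⟩ hs0

theorem logJensenGap_pow_three_le {l a b : ℝ} (hl : l ∈ Icc (0 : ℝ) 1) (hb : 0 < b) (hba : b ≤ a)
    (hab : a + b ≤ 2) : logJensenGap l (a ^ 3) ≤ logJensenGap l (b ^ 3) := by
  have hanti : ∀ {c}, b ≤ c → c ≤ 1 → logJensenGap l (c ^ 3) ≤ logJensenGap l (b ^ 3) :=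
    fun {c} hbc hc1 =>
      have hcube := pow_le_pow_left₀ hb.le hbc 3
      have hc1' := pow_le_one₀ (hb.le.trans hbc) hc1
      logJensenGap_antitoneOn hl ⟨pow_pos hb 3, hcube.trans hc1'⟩
        ⟨(pow_pos hb 3).trans_le hcube, hc1'⟩ hcube
  rcases le_total a 1 with ha1 | ha1
  · exact hanti hba ha1
  · calc logJensenGap l (a ^ 3)
        = logJensenGap l ((1 + (a - 1)) ^ 3) := by ring_nf
      _ ≤ logJensenGap l ((1 - (a - 1)) ^ 3) :=
          logJensenGap_one_add_pow_three_le hl (by linarith) (by linarith)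
      _ ≤ logJensenGap l (b ^ 3) := hanti (by linarith) (by linarith)

theorem sub_mul_logJensenGap_sub_nonpos {l A B : ℝ} (hl : l ∈ Icc (0 : ℝ) 1) (hA : 0 < A)
    (hB : 0 < B) (hsum : A ^ (3⁻¹ : ℝ) + B ^ (3⁻¹ : ℝ) ≤ 2) :
    (A - B) * (logJensenGap l A - logJensenGap l B) ≤ 0 := by
  wlog hBA : B ≤ A generalizing A B
  · have := this hB hA (by linarith) (le_of_not_ge hBA)
    linarith [show (B - A) * (logJensenGap l B - logJensenGap l A)
      = (A - B) * (logJensenGap l A - logJensenGap l B) by ring]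
  have hcube : ∀ {C : ℝ}, 0 ≤ C → (C ^ (3⁻¹ : ℝ)) ^ 3 = C := fun hC =>
    mod_cast rpow_inv_natCast_pow hC three_ne_zero
  have hgap := logJensenGap_pow_three_le hl (rpow_pos_of_pos hB _)
    (rpow_le_rpow hB.le hBA (by norm_num : (0 : ℝ) ≤ 3⁻¹)) (by linarith)
  rw [hcube hA.le, hcube hB.le] at hgap
  exact mul_nonpos_of_nonneg_of_nonpos (sub_nonneg.2 hBA) (sub_nonpos.2 hgap)

theorem cbrt_prod_one_add_add_cbrt_prod_one_sub_le_two {t₁ t₂ t₃ : ℝ} (h₁ : t₁ ∈ Icc (-1 : ℝ) 1)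
    (h₂ : t₂ ∈ Icc (-1 : ℝ) 1) (h₃ : t₃ ∈ Icc (-1 : ℝ) 1) :
    ((1 + t₁) * (1 + t₂) * (1 + t₃)) ^ (3⁻¹ : ℝ) + ((1 - t₁) * (1 - t₂) * (1 - t₃)) ^ (3⁻¹ : ℝ)
      ≤ 2 := by
  have amgm : ∀ {x y z : ℝ}, 0 ≤ x → 0 ≤ y → 0 ≤ z → (x * y * z) ^ (3⁻¹ : ℝ) ≤ (x + y + z) / 3 :=
    fun {x y z} hx hy hz => by
      rw [mul_rpow (mul_nonneg hx hy) hz, mul_rpow hx hy]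
      linarith [geom_mean_le_arith_mean3_weighted (w₁ := 3⁻¹) (w₂ := 3⁻¹) (w₃ := 3⁻¹)
        (by norm_num) (by norm_num) (by norm_num) hx hy hz (by norm_num)]
  linarith [amgm (x := 1 + t₁) (y := 1 + t₂) (z := 1 + t₃)
      (by linarith [h₁.1]) (by linarith [h₂.1]) (by linarith [h₃.1]),
    amgm (x := 1 - t₁) (y := 1 - t₂) (z := 1 - t₃)
      (by linarith [h₁.2]) (by linarith [h₂.2]) (by linarith [h₃.2])]

theorem stmt_0 (t1 t2 t3 : ℝ) (h1 : t1 ∈ Set.Ioo (-1:ℝ) 1) (h2 : t2 ∈ Set.Ioo (-1:ℝ) 1)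
    (h3 : t3 ∈ Set.Ioo (-1:ℝ) 1) (l : ℝ) (hl : l ∈ Set.Icc (0:ℝ) 1) :
    (t1 + t2 + t3 + t1*t2*t3) *
      arctanh (l*(t1 + t2 + t3 + t1*t2*t3) / (1 + l*(t1*t2 + t2*t3 + t3*t1)))
    ≤ l * (t1 + t2 + t3 + t1*t2*t3) * (arctanh t1 + arctanh t2 + arctanh t3) := by
  set A := (1 + t1) * (1 + t2) * (1 + t3)
  set B := (1 - t1) * (1 - t2) * (1 - t3)
  have hA : 0 < A :=
    mul_pos (mul_pos (by linarith [h1.1]) (by linarith [h2.1])) (by linarith [h3.1])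
  have hB : 0 < B :=
    mul_pos (mul_pos (by linarith [h1.2]) (by linarith [h2.2])) (by linarith [h3.2])
  have hDA := one_sub_add_mul_pos hl hA
  have hDB := one_sub_add_mul_pos hl hB
  have harg : l * (t1 + t2 + t3 + t1*t2*t3) / (1 + l * (t1*t2 + t2*t3 + t3*t1))
      = ((1 - l + l * A) - (1 - l + l * B)) / ((1 - l + l * A) + (1 - l + l * B)) := by
    rw [show 1 + l * (t1*t2 + t2*t3 + t3*t1) = ((1 - l + l * A) + (1 - l + l * B)) / 2 by ring]
    field_simp
    ring
  have key := sub_mul_logJensenGap_sub_nonpos hl hA hB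
    (cbrt_prod_one_add_add_cbrt_prod_one_sub_le_two (Ioo_subset_Icc_self h1)
      (Ioo_subset_Icc_self h2) (Ioo_subset_Icc_self h3))
  rw [harg, arctanh_sub_div_add hDA hDB, arctanh_add_arctanh_add_arctanh h1 h2 h3]
  unfold logJensenGap at key
  linarith
end

section
/- Let t₁, t₂, t₃ ∈ (-1,1) with t₁ + t₂ + t₃ + t₁t₂t₃ > 0. Then t₁ + t₂ + t₃ + t₁t₂t₃ < arctanh(t₁) + arctanh(t₂) + arctanh(t₃). -/
open Set

lemma strictMonoOn_Ioo_of_hasDerivAt_pos_of_ne {f f' : ℝ → ℝ} {a b c : ℝ} (hc : c ∈ Ioo a b)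
    (hf : ∀ x ∈ Ioo a b, HasDerivAt f (f' x) x) (hf' : ∀ x ∈ Ioo a b, x ≠ c → 0 < f' x) :
    StrictMonoOn f (Ioo a b) := by
  have piece : ∀ D ⊆ Ioo a b, Convex ℝ D → c ∉ interior D → StrictMonoOn f D :=
    fun D hD hconv hcD => strictMonoOn_of_hasDerivWithinAt_pos hconv
      (fun x hx => (hf x (hD hx)).continuousAt.continuousWithinAt)
      (fun x hx => (hf x (hD (interior_subset hx))).hasDerivWithinAt)
      (fun x hx => hf' x (hD (interior_subset hx)) (ne_of_mem_of_not_mem hx hcD))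
  rw [← Ioc_union_Ico_eq_Ioo hc.1 hc.2]
  exact (piece _ (Ioc_subset_Ioo_right hc.2) (convex_Ioc a c) (by simp)).union
    (piece _ (Ico_subset_Ioo_left hc.1) (convex_Ico c b) (by simp))
    ⟨right_mem_Ioc.2 hc.1, fun _ hx => hx.2⟩ ⟨left_mem_Ico.2 hc.2, fun _ hx => hx.1⟩

lemma arctanh_neg (x : ℝ) : arctanh (-x) = -arctanh x := by
  rw [arctanh, arctanh, ← mul_neg, ← Real.log_inv, inv_div, sub_neg_eq_add, ← sub_eq_add_neg]

lemma arctanh_add {a b : ℝ} (ha : a ∈ Ioo (-1 : ℝ) 1) (hb : b ∈ Ioo (-1 : ℝ) 1) :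
    arctanh a + arctanh b = arctanh ((a + b) / (1 + a * b)) := by
  obtain ⟨ha₁, ha₂⟩ := ha
  obtain ⟨hb₁, hb₂⟩ := hb
  have hab : 0 < 1 + a * b := by nlinarith
  have hne : 1 + a * b - (a + b) ≠ 0 := by nlinarith
  have hqa : (1 + a) / (1 - a) ≠ 0 := (div_pos (by linarith) (by linarith)).ne'
  have hqb : (1 + b) / (1 - b) ≠ 0 := (div_pos (by linarith) (by linarith)).ne'
  rw [arctanh, arctanh, arctanh, ← mul_add, ← Real.log_mul hqa hqb]
  congr 2
  field_simp
  ring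

lemma add_div_one_add_mul_mem_Ioo {a b : ℝ} (ha : a ∈ Ioo (-1 : ℝ) 1) (hb : b ∈ Ioo (-1 : ℝ) 1) :
    (a + b) / (1 + a * b) ∈ Ioo (-1 : ℝ) 1 := by
  obtain ⟨ha₁, ha₂⟩ := ha
  obtain ⟨hb₁, hb₂⟩ := hb
  have hab : 0 < 1 + a * b := by nlinarith
  rw [mem_Ioo, lt_div_iff₀ hab, div_lt_one hab]
  constructor <;> nlinarith

lemma one_sub_sq_pos {x : ℝ} (hx : x ∈ Ioo (-1 : ℝ) 1) : 0 < 1 - x ^ 2 := by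
  nlinarith [hx.1, hx.2]

lemma hasDerivAt_arctanh {x : ℝ} (hx : x ∈ Ioo (-1 : ℝ) 1) :
    HasDerivAt arctanh (1 / (1 - x ^ 2)) x := by
  have h₁ : 1 + x ≠ 0 := by linarith [hx.1]
  have h₂ : 1 - x ≠ 0 := by linarith [hx.2]
  have hq := ((hasDerivAt_id' x).const_add 1).fun_div ((hasDerivAt_id' x).const_sub 1) h₂
  refine ((hq.log (div_ne_zero h₁ h₂)).const_mul (1 / 2 : ℝ)).congr_deriv ?_
  field_simp [(one_sub_sq_pos hx).ne']
  ring

lemma strictMonoOn_arctanh_sub_self : StrictMonoOn (fun y => arctanh y - y) (Ioo (-1) 1) :=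
  strictMonoOn_Ioo_of_hasDerivAt_pos_of_ne (f' := fun x => x ^ 2 / (1 - x ^ 2)) (c := 0)
    (by norm_num)
    (fun x hx => ((hasDerivAt_arctanh hx).sub (hasDerivAt_id' x)).congr_deriv <| by
      field_simp [(one_sub_sq_pos hx).ne']; ring)
    fun x hx _ => div_pos (by positivity) (one_sub_sq_pos hx)

lemma strictMonoOn_arctanh_sub_cubic :
    StrictMonoOn (fun y => arctanh y - y - y ^ 3 / 3) (Ioo (-1) 1) :=
  strictMonoOn_Ioo_of_hasDerivAt_pos_of_ne (f' := fun x => x ^ 4 / (1 - x ^ 2)) (c := 0)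
    (by norm_num)
    (fun x hx => (((hasDerivAt_arctanh hx).sub (hasDerivAt_id' x)).sub
      ((hasDerivAt_pow 3 x).div_const 3)).congr_deriv <| by
      field_simp [(one_sub_sq_pos hx).ne']; ring)
    fun x hx _ => div_pos (by positivity) (one_sub_sq_pos hx)

lemma arctanh_zero : arctanh 0 = 0 := by simp [arctanh]

lemma add_cube_div_three_lt_arctanh {t : ℝ} (ht : t ∈ Ioo (0 : ℝ) 1) :
    t + t ^ 3 / 3 < arctanh t := by
  have := strictMonoOn_arctanh_sub_cubic (by norm_num) ⟨by linarith [ht.1], ht.2⟩ ht.1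
  norm_num [arctanh_zero] at this
  linarith

lemma add_lt_arctanh_add_arctanh {u x : ℝ} (hu : u ∈ Ioo (-1 : ℝ) 1) (hx : x ∈ Ioo (-1 : ℝ) 1)
    (h : 0 < u + x) : u + x < arctanh u + arctanh x := by
  have := strictMonoOn_arctanh_sub_self ⟨by linarith [hu.2], by linarith [hu.1]⟩ hx
    (by linarith : -u < x)
  simp only [arctanh_neg] at this
  linarith

lemma add_add_add_mul_mul_lt_arctanh_of_mul_nonpos {a b x : ℝ} (ha : a ∈ Ioo (-1 : ℝ) 1)
    (hb : b ∈ Ioo (-1 : ℝ) 1) (hx : x ∈ Ioo (-1 : ℝ) 1) (hab : a * b ≤ 0)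
    (hpos : 0 < a + b + x + a * b * x) :
    a + b + x + a * b * x < arctanh a + arctanh b + arctanh x := by
  set u := (a + b) / (1 + a * b) with hu
  have hc : 0 < 1 + a * b := by nlinarith [ha.1, ha.2, hb.1, hb.2]
  have hsplit : a + b + x + a * b * x = (1 + a * b) * (u + x) := by
    rw [hu]; field_simp; ring
  have hux : 0 < u + x := pos_of_mul_pos_right (hsplit ▸ hpos) hc.le
  calc a + b + x + a * b * x = (1 + a * b) * (u + x) := hsplit
    _ ≤ u + x := by nlinarith
    _ < arctanh u + arctanh x :=
      add_lt_arctanh_add_arctanh (add_div_one_add_mul_mem_Ioo ha hb) hx hux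
    _ = arctanh a + arctanh b + arctanh x := by rw [arctanh_add ha hb]

lemma add_add_add_mul_mul_lt_arctanh_of_pos {a b c : ℝ} (ha : a ∈ Ioo (0 : ℝ) 1)
    (hb : b ∈ Ioo (0 : ℝ) 1) (hc : c ∈ Ioo (0 : ℝ) 1) :
    a + b + c + a * b * c < arctanh a + arctanh b + arctanh c := by
  have hamgm : 3 * (a * b * c) ≤ a ^ 3 + b ^ 3 + c ^ 3 := by
    nlinarith [sq_nonneg (a - b), sq_nonneg (b - c), sq_nonneg (a - c), ha.1, hb.1, hc.1]
  linarith [add_cube_div_three_lt_arctanh ha, add_cube_div_three_lt_arctanh hb,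
    add_cube_div_three_lt_arctanh hc]

theorem stmt_2 (t1 t2 t3 : ℝ) (h1 : t1 ∈ Set.Ioo (-1:ℝ) 1) (h2 : t2 ∈ Set.Ioo (-1:ℝ) 1)
    (h3 : t3 ∈ Set.Ioo (-1:ℝ) 1) (hpos : 0 < t1 + t2 + t3 + t1*t2*t3) :
    t1 + t2 + t3 + t1*t2*t3 < arctanh t1 + arctanh t2 + arctanh t3 := by
  rcases le_or_gt (t1 * t2) 0 with h12 | h12
  · exact add_add_add_mul_mul_lt_arctanh_of_mul_nonpos h1 h2 h3 h12 hpos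
  rcases le_or_gt (t1 * t3) 0 with h13 | h13
  · have := add_add_add_mul_mul_lt_arctanh_of_mul_nonpos h1 h3 h2 h13 (by linarith)
    linarith
  rcases le_or_gt (t2 * t3) 0 with h23 | h23
  · have := add_add_add_mul_mul_lt_arctanh_of_mul_nonpos h2 h3 h1 h23 (by linarith)
    linarith
  -- `t₁ (t₁ + t₂ + t₃ + t₁t₂t₃) = t₁² + t₁t₂ + t₁t₃ + t₁²(t₂t₃) > 0`
  have hprod : 0 < (t1 + t2 + t3 + t1 * t2 * t3) * t1 := by
    nlinarith [sq_nonneg t1, mul_nonneg (sq_nonneg t1) h23.le]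
  have ht1 : 0 < t1 := pos_of_mul_pos_right hprod hpos.le
  exact add_add_add_mul_mul_lt_arctanh_of_pos ⟨ht1, h1.2⟩ ⟨pos_of_mul_pos_right h12 ht1.le, h2.2⟩
    ⟨pos_of_mul_pos_right h13 ht1.le, h3.2⟩
end
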